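/- Let φ(x) = √(α/π) e^{-αx²} with α > 0. Then for all real x, |φ(x) - √(4α/(3π)) Σ_{k∈ℤ} e^{-αk²/3} φ(2x-k)| ≤ ε · φ(x), where ε = θ₃(0, e^{-3π²/(4α)}) - 1. -/

import Mathlib

/-!
Completing the square turns the two-scale sum into `φ(x)` times the periodised Gaussian
`√(β/π) ∑ₖ exp(-β(k - t)²)` with `β = 4α/3`, `t = 3x/2`. By Poisson summation the latter equals
`∑ₙ exp(-π²n²/β) exp(-2πint)`, whose `n = 0` term is `1` while the other terms have total modulus
at most `θ₃(0, exp(-π²/β)) - 1`.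
-/

open Real

lemma summable_exp_neg_mul_int_sq {c : ℝ} (hc : 0 < c) :
    Summable fun n : ℤ => rexp (-c * n ^ 2) := by
  refine (summable_pow_mul_jacobiTheta₂_term_bound 0 (div_pos hc pi_pos) 0).congr fun n => ?_
  simp only [pow_zero, one_mul, mul_zero]
  congr 1
  field_simp
  ring

lemma norm_tsum_sub_le_tsum_sub {ι E : Type*} [NormedAddCommGroup E] [CompleteSpace E]
    [DecidableEq ι] {f : ι → E} {g : ι → ℝ} (hg : Summable g) (hfg : ∀ n, ‖f n‖ ≤ g n) (i : ι) :
    ‖∑' n, f n - f i‖ ≤ ∑' n, g n - g i := by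
  have hf : Summable f := hg.of_norm_bounded hfg
  refine (hasSum_ite_sub_hasSum hf.hasSum i).norm_le_of_bounded
    (hasSum_ite_sub_hasSum hg.hasSum i) fun n => ?_
  split_ifs
  · simp
  · exact hfg n

open Complex in
/-- Poisson summation for a shifted Gaussian. -/
lemma sqrt_mul_tsum_exp_neg_mul_sub_sq {β : ℝ} (hβ : 0 < β) (t : ℝ) :
    ((√(β / π) * ∑' k : ℤ, rexp (-β * (k - t) ^ 2) : ℝ) : ℂ) =
      ∑' n : ℤ, (rexp (-(π ^ 2 / β) * n ^ 2) : ℂ) * cexp (-(2 * π * n * t) * I) := by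
  have hβ' : (β : ℂ) ≠ 0 := ofReal_ne_zero.mpr hβ.ne'
  have ha : 0 < (β / π : ℝ) := div_pos hβ pi_pos
  have hpoisson := Complex.tsum_exp_neg_quadratic (a := ((β / π : ℝ) : ℂ)) (by simpa using ha)
    ((β * t / π : ℝ) : ℂ)
  have hroot : ((β / π : ℝ) : ℂ) ^ (1 / 2 : ℂ) = (√(β / π) : ℂ) := by
    rw [sqrt_eq_rpow, ofReal_cpow ha.le]
    norm_num
  -- Both sides of Jacobi's transformation carry the factor `exp(βt²)` from completing the square.
  have hleft : ∀ n : ℤ, cexp (-π * ((β / π : ℝ) : ℂ) * n ^ 2 + 2 * π * ((β * t / π : ℝ) : ℂ) * n)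
      = cexp (β * t ^ 2) * (rexp (-β * (n - t) ^ 2) : ℂ) := by
    intro n
    rw [ofReal_exp, ← Complex.exp_add]
    congr 1
    push_cast
    field_simp
    ring
  have hright : ∀ n : ℤ, cexp (-π / ((β / π : ℝ) : ℂ) * (n + I * ((β * t / π : ℝ) : ℂ)) ^ 2)
      = cexp (β * t ^ 2) * ((rexp (-(π ^ 2 / β) * n ^ 2) : ℂ) * cexp (-(2 * π * n * t) * I)) := by
    intro n
    rw [ofReal_exp, ← Complex.exp_add, ← Complex.exp_add]
    congr 1
    push_cast
    field_simp
    ring_nf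
    rw [I_sq]
    ring
  simp_rw [hleft, hright, tsum_mul_left, hroot] at hpoisson
  have hsqrt : (√(β / π) : ℂ) ≠ 0 := ofReal_ne_zero.mpr (sqrt_pos.mpr ha).ne'
  rw [ofReal_mul, ofReal_tsum]
  refine mul_left_cancel₀ (Complex.exp_ne_zero (β * t ^ 2)) ?_
  rw [mul_left_comm, hpoisson, ← mul_assoc, mul_one_div_cancel hsqrt, one_mul]

lemma abs_sqrt_mul_tsum_exp_neg_mul_sub_sq_sub_one_le {β : ℝ} (hβ : 0 < β) (t : ℝ) :
    |√(β / π) * ∑' k : ℤ, rexp (-β * (k - t) ^ 2) - 1| ≤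
      ∑' n : ℤ, rexp (-(π ^ 2 / β) * n ^ 2) - 1 := by
  have h := norm_tsum_sub_le_tsum_sub (summable_exp_neg_mul_int_sq (by positivity : 0 < π ^ 2 / β))
    (f := fun n : ℤ => (rexp (-(π ^ 2 / β) * n ^ 2) : ℂ) * Complex.exp (-(2 * π * n * t) * Complex.I))
    (fun n => by
      rw [norm_mul, Complex.norm_real, Real.norm_of_nonneg (Real.exp_pos _).le, Complex.norm_exp]
      simp) 0
  simp only [Int.cast_zero, zero_pow two_ne_zero, mul_zero, neg_zero, zero_mul,
    Real.exp_zero, Complex.exp_zero, Complex.ofReal_one, mul_one] at h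
  rwa [← sqrt_mul_tsum_exp_neg_mul_sub_sq hβ t, ← Complex.ofReal_one, ← Complex.ofReal_sub,
    Complex.norm_real, Real.norm_eq_abs] at h

theorem approximate_two_scale (α : ℝ) (hα : 0 < α) (x : ℝ) :
    |Real.sqrt (α / π) * Real.exp (-α * x^2) -
        Real.sqrt (4 * α / (3 * π)) *
          ∑' k : ℤ, Real.exp (-α * (k : ℝ)^2 / 3) *
            (Real.sqrt (α / π) * Real.exp (-α * (2 * x - (k : ℝ))^2))| ≤
      ((∑' n : ℤ, Real.exp (-(3 * π^2 / (4 * α)) * (n : ℝ)^2)) - 1) *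
        (Real.sqrt (α / π) * Real.exp (-α * x^2)) := by
  set φx := √(α / π) * rexp (-α * x ^ 2)
  have hφx : 0 ≤ φx := by positivity
  have hsquare : ∀ k : ℤ, rexp (-α * k ^ 2 / 3) * (√(α / π) * rexp (-α * (2 * x - k) ^ 2)) =
      φx * rexp (-(4 * α / 3) * (k - 3 * x / 2) ^ 2) := by
    intro k
    rw [mul_left_comm, mul_assoc, ← Real.exp_add, ← Real.exp_add]
    ring_nf
  have hroot : 4 * α / (3 * π) = 4 * α / 3 / π := by ring
  have hdual : 3 * π ^ 2 / (4 * α) = π ^ 2 / (4 * α / 3) := by field_simp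
  rw [tsum_congr hsquare, tsum_mul_left, hroot, hdual]
  calc _ = φx * |√(4 * α / 3 / π) * ∑' k : ℤ, rexp (-(4 * α / 3) * (k - 3 * x / 2) ^ 2) - 1| := by
        rw [← abs_of_nonneg hφx, ← abs_mul, abs_of_nonneg hφx, abs_sub_comm]
        congr 1
        ring
    _ ≤ _ := by
        rw [mul_comm _ φx]
        gcongr
        exact abs_sqrt_mul_tsum_exp_neg_mul_sub_sq_sub_one_le (by positivity) _
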